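/- arXiv:2411.06771 — 9 statements merged into one kernel-verified Lean document; each statement's English description precedes it below -/
import Mathlib

section
/- Let $E$ be a finite set, $\psi\colon E\to \Gamma$ a map to an abelian group, $F\subseteq \Gamma$ a finite set, and $A=\{a_1,\dots,a_r\}$, $B=\{b_1,\dots,b_r\}$ disjoint subsets of $E$ with $r=|F|+1$ and $\psi(B)\notin F$. Define $\hat B_{i,j} = \{b_1,\dots,b_{i-1},a_i,\dots,a_j,b_{j+1},\dots,b_r\}$. If $\psi(\hat B_{1,j})\in F$ for every $j$ with $1\le j\le r$, then there exists a pair $(i,j)$ with $1 < i\le j\le r$ such that $\psi(\hat B_{i,j}) = \psi(B)$. -/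
/-- Lemma 2.2 (pigeonhole lemma), second part: if moreover `ψ(B̂_{1,j}) ∈ F` for every
`j ≥ 1`, then there is a pair `(i,j)` with `i > 1` such that `ψ(B̂_{i,j}) = ψ(B)`.
(Indices are 0-based, so `i > 1` becomes `i > 0`.) -/
theorem stmt_1 {E Γ : Type*} [DecidableEq E] [AddCommGroup Γ]
    (ψ : E → Γ) (F : Finset Γ)
    (a b : Fin (F.card + 1) → E)
    (ha : Function.Injective a) (hb : Function.Injective b)
    (hab : ∀ s t, a s ≠ b t)
    (hB : ∑ t, ψ (b t) ∉ F)
    (hpre : ∀ j : Fin (F.card + 1),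
      ∑ e ∈ ((Finset.univ.image b \ (Finset.Icc 0 j).image b) ∪ (Finset.Icc 0 j).image a),
        ψ e ∈ F) :
    ∃ i j : Fin (F.card + 1), 0 < i ∧ i ≤ j ∧
      ∑ e ∈ ((Finset.univ.image b \ (Finset.Icc i j).image b) ∪ (Finset.Icc i j).image a),
        ψ e = ∑ t, ψ (b t) := by
  have key : ∀ s : Finset (Fin (F.card + 1)),
      ∑ e ∈ ((Finset.univ.image b \ s.image b) ∪ s.image a), ψ e
      = (∑ t, ψ (b t)) + ∑ t ∈ s, (ψ (a t) - ψ (b t)) := by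
    intro s
    have hdisj : Disjoint (Finset.univ.image b \ s.image b) (s.image a) := by
      rw [Finset.disjoint_left]
      intro x hx hx'
      rcases Finset.mem_image.1 (Finset.mem_sdiff.1 hx).1 with ⟨t, _, rfl⟩
      rcases Finset.mem_image.1 hx' with ⟨u, _, h⟩
      exact hab u t h
    rw [Finset.sum_union hdisj]
    have hsub : s.image b ⊆ Finset.univ.image b :=
      Finset.image_subset_image (Finset.subset_univ s)
    have h1 : ∑ e ∈ (Finset.univ.image b \ s.image b), ψ e
        = ∑ e ∈ Finset.univ.image b, ψ e - ∑ e ∈ s.image b, ψ e := by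
      rw [eq_sub_iff_add_eq, Finset.sum_sdiff hsub]
    rw [h1, Finset.sum_image (fun x _ y _ h => hb h),
      Finset.sum_image (fun x _ y _ h => hb h),
      Finset.sum_image (fun x _ y _ h => ha h), Finset.sum_sub_distrib]
    abel
  -- pigeonhole
  have hcard : Fintype.card F < Fintype.card (Fin (F.card + 1)) := by
    simp
  obtain ⟨j, j', hne, heq⟩ := Fintype.exists_ne_map_eq_of_card_lt
    (fun j : Fin (F.card + 1) =>
      (⟨∑ e ∈ ((Finset.univ.image b \ (Finset.Icc 0 j).image b) ∪ (Finset.Icc 0 j).image a),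
        ψ e, hpre j⟩ : F)) hcard
  have main : ∀ p q : Fin (F.card + 1), p < q →
      ∑ t ∈ Finset.Icc 0 p, (ψ (a t) - ψ (b t))
        = ∑ t ∈ Finset.Icc 0 q, (ψ (a t) - ψ (b t)) →
      ∃ i j : Fin (F.card + 1), 0 < i ∧ i ≤ j ∧
        ∑ e ∈ ((Finset.univ.image b \ (Finset.Icc i j).image b) ∪ (Finset.Icc i j).image a),
          ψ e = ∑ t, ψ (b t) := by
    intro p q hlt heq'
    have hq : (q : ℕ) < F.card + 1 := q.isLt
    have hpq : (p : ℕ) < (q : ℕ) := hlt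
    set i : Fin (F.card + 1) := ⟨(p : ℕ) + 1, by omega⟩ with hi
    have hsplit : Finset.Icc (0 : Fin (F.card + 1)) p ∪ Finset.Icc i q
        = Finset.Icc 0 q := by
      ext t
      simp only [Finset.mem_union, Finset.mem_Icc, Fin.le_def, hi]
      simp only [Fin.val_zero]
      omega
    have hdisj2 : Disjoint (Finset.Icc (0 : Fin (F.card + 1)) p) (Finset.Icc i q) := by
      rw [Finset.disjoint_left]
      intro t ht ht'
      simp only [Finset.mem_Icc, Fin.le_def, hi] at ht ht'
      omega
    have hzero : ∑ t ∈ Finset.Icc i q, (ψ (a t) - ψ (b t)) = 0 := by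
      have := Finset.sum_union hdisj2 (f := fun t => ψ (a t) - ψ (b t))
      rw [hsplit] at this
      rw [← heq'] at this
      exact (left_eq_add.1 this)
    refine ⟨i, q, ?_, ?_, ?_⟩
    · exact Fin.lt_def.2 (by simp [hi])
    · exact Fin.le_def.2 (by simp [hi]; omega)
    · rw [key, hzero, add_zero]
  have heq' : ∑ t ∈ Finset.Icc 0 j, (ψ (a t) - ψ (b t))
      = ∑ t ∈ Finset.Icc 0 j', (ψ (a t) - ψ (b t)) := by
    have := Subtype.ext_iff.1 heq
    simp only [key] at this
    exact add_left_cancel this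
  rcases lt_or_gt_of_ne hne with hlt | hlt
  · exact main j j' hlt heq'
  · exact main j' j hlt heq'.symm
end

section
/- Define $c_0 := 1$ and, for $k\ge 1$, let $c_k$ be the smallest integer such that for all abelian groups $\Gamma_1,\dots,\Gamma_k$, labelings $\psi_i\colon E\to\Gamma_i$, elements $f_i\in\Gamma_i$, subset $B\subseteq E$ with $\psi_i(B)\ne f_i$ for all $i$, and pairwise disjoint nonempty subsets $X_1,\dots,X_\ell\subseteq B$, $Y_1,\dots,Y_\ell\subseteq E\setminus B$ with $\ell\ge c_k$, there exist $1\le i\le j\le \ell$ with $\psi_t(B_{i,j})\ne f_t$ for all $t\in[k]$, where $B_{i,j} := (B\setminus(X_i\cup\dots\cup X_j))\cup(Y_i\cup\dots\cup Y_j)$. Then $c_k \le k\cdot c_{k-1}+1$ for all $k\ge 1$. -/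
/-- `Good k n` says: for every finite set `E`, `k` group labelings with forbidden values,
a set `B` avoiding them, and `ℓ ≥ n` pairwise disjoint nonempty exchange sets,
some exchanged set `B_{i,j}` avoids all forbidden values. -/
def Good (k n : ℕ) : Prop :=
  ∀ (E : Type) [DecidableEq E] (Γ : Fin k → Type) [∀ t, AddCommGroup (Γ t)]
    (ψ : ∀ t, E → Γ t) (f : ∀ t, Γ t) (B : Finset E) (ℓ : ℕ) (X Y : Fin ℓ → Finset E),
    (∀ t, ∑ e ∈ B, ψ t e ≠ f t) →
    (∀ i, X i ⊆ B) → (∀ i, ∀ e ∈ Y i, e ∉ B) →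
    (∀ i, (X i).Nonempty) → (∀ i, (Y i).Nonempty) →
    (∀ i j, i ≠ j → Disjoint (X i) (X j)) →
    (∀ i j, i ≠ j → Disjoint (Y i) (Y j)) →
    n ≤ ℓ →
    ∃ i j : Fin ℓ, i ≤ j ∧ ∀ t,
      ∑ e ∈ ((B \ (Finset.Icc i j).biUnion X) ∪ (Finset.Icc i j).biUnion Y), ψ t e ≠ f t

/-- `cseq k` is the smallest `n` such that `Good k n` holds (`⊤` if there is none). -/
noncomputable def cseq (k : ℕ) : ℕ∞ :=
  sInf ((fun n : ℕ => (n : ℕ∞)) '' {n | Good k n})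

/-!
Suppose `ℓ ≥ (k+1)·c + 1` and every `B_{i,j}` fails. Each prefix exchange `B_{1,y}` then hits the
forbidden value in some colour, so by pigeonhole one colour `t` is hit by `c + 1` prefixes
`y₀ < ⋯ < y_c`. Any two of these prefixes have the same `ψ_t`-value, so exchanging the merged
blocks `(y_r, y_{r+1}]` never changes `ψ_t`. Applying `Good k c` to these `c` merged exchange
pairs and the other `k` colours yields an interval of blocks whose exchange avoids all forbidden
values, and it is a `B_{i,j}` of the original system.
-/

open Finset Function

theorem Monotone.finset_biUnion_Ico_Ioc_map_succ {α : Type*} [LinearOrder α] [LocallyFiniteOrder α]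
    {f : ℕ → α} (hf : Monotone f) (m n : ℕ) :
    (Ico m n).biUnion (fun i => Ioc (f i) (f (i + 1))) = Ioc (f m) (f n) :=
  coe_injective <| by simpa [Order.succ_eq_add_one] using hf.biUnion_Ico_Ioc_map_succ m n

theorem Monotone.pairwise_disjoint_on_finset_Ioc_succ {α : Type*} [LinearOrder α]
    [LocallyFiniteOrder α] {f : ℕ → α} (hf : Monotone f) :
    Pairwise (Disjoint on fun i => Ioc (f i) (f (i + 1))) := fun i j hij => by
  simpa [← disjoint_coe, Order.succ_eq_add_one] using hf.pairwise_disjoint_on_Ioc_succ hij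

theorem Fin.biUnion_Icc_eq_biUnion_Ico_val {β : Type*} [DecidableEq β] {c : ℕ}
    (g : ℕ → Finset β) (s s' : Fin c) :
    (Icc s s').biUnion (fun r => g r) = (Ico (s : ℕ) (s' + 1)).biUnion g := by
  ext x
  simp only [mem_biUnion, mem_Icc, mem_Ico, Fin.le_def]
  constructor
  · rintro ⟨r, ⟨hsr, hrs'⟩, hx⟩
    exact ⟨r, ⟨hsr, by omega⟩, hx⟩
  · rintro ⟨r, ⟨hsr, hrs'⟩, hx⟩
    exact ⟨⟨r, by omega⟩, ⟨hsr, by simp only; omega⟩, hx⟩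

theorem Pairwise.disjoint_biUnion {ι κ E : Type*} [DecidableEq E] {S : κ → Finset ι}
    {Z : ι → Finset E} (hS : Pairwise (Disjoint on S)) (hZ : Pairwise (Disjoint on Z)) :
    Pairwise (Disjoint on fun r => (S r).biUnion Z) := fun _ _ hrr' =>
  (disjoint_biUnion_left _ _ _).mpr fun _ hi => (disjoint_biUnion_right _ _ _).mpr fun _ hj =>
    hZ fun hij => disjoint_left.mp (hS hrr') hi (hij ▸ hj)

theorem exists_monotone_chain_of_mul_lt_card {ι κ : Type*} [LinearOrder ι] [Fintype ι]
    [Fintype κ] [DecidableEq κ] (col : ι → κ) {c : ℕ} (h : Fintype.card κ * c < Fintype.card ι) :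
    ∃ t, ∃ J : ℕ → ι, Monotone J ∧ (∀ r < c, J r < J (r + 1)) ∧ ∀ r, col (J r) = t := by
  obtain ⟨t, -, ht⟩ := exists_lt_card_fiber_of_mul_lt_card_of_maps_to (s := univ) (t := univ)
    (f := col) (fun _ _ => mem_univ _) (by simpa using h)
  let e := (univ.filter (col · = t)).orderEmbOfCardLe ht
  refine ⟨t, fun r => e (Fin.clamp r c), fun r r' hrr' => e.monotone ?_, fun r hr => e.strictMono ?_,
    fun r => (mem_filter.mp (orderEmbOfCardLe_mem _ ht _)).2⟩
  · simp only [Fin.le_def, Fin.clamp]; omega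
  · simp only [Fin.lt_def, Fin.clamp]; omega

section Exchange

variable {E ι : Type*} [DecidableEq E]

/-- `exchange B X Y (Icc i j)` is the set `B_{i,j}`. -/
def exchange (B : Finset E) (X Y : ι → Finset E) (s : Finset ι) : Finset E :=
  (B \ s.biUnion X) ∪ s.biUnion Y

theorem exchange_biUnion [DecidableEq ι] {κ : Type*} (B : Finset E) (X Y : ι → Finset E)
    (S : κ → Finset ι) (s : Finset κ) :
    exchange B (fun r => (S r).biUnion X) (fun r => (S r).biUnion Y) s
      = exchange B X Y (s.biUnion S) := by
  simp only [exchange, biUnion_biUnion]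

theorem sum_exchange {G : Type*} [AddCommGroup G] (ψ : E → G) {B : Finset E} {X Y : ι → Finset E}
    (hX : ∀ i, X i ⊆ B) (hY : ∀ i, ∀ e ∈ Y i, e ∉ B) (hXd : Pairwise (Disjoint on X))
    (hYd : Pairwise (Disjoint on Y)) (s : Finset ι) :
    ∑ e ∈ exchange B X Y s, ψ e
      = ∑ e ∈ B, ψ e + ∑ i ∈ s, (∑ e ∈ Y i, ψ e - ∑ e ∈ X i, ψ e) := by
  have hdisj : Disjoint (B \ s.biUnion X) (s.biUnion Y) := disjoint_right.mpr fun e he heB => by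
    obtain ⟨i, -, hi⟩ := mem_biUnion.mp he
    exact hY i e hi (mem_sdiff.mp heB).1
  rw [exchange, sum_union hdisj, sum_sdiff_eq_sub (biUnion_subset.mpr fun i _ => hX i),
    sum_biUnion (hXd.set_pairwise _), sum_biUnion (hYd.set_pairwise _), sum_sub_distrib]
  abel

end Exchange

theorem cseq_le_of_good {k n : ℕ} (h : Good k n) : cseq k ≤ n := sInf_le ⟨n, h, rfl⟩

theorem exists_good_eq_cseq {k : ℕ} (h : cseq k ≠ ⊤) : ∃ n, Good k n ∧ (n : ℕ∞) = cseq k := by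
  have hne : ((fun n : ℕ => (n : ℕ∞)) '' {n | Good k n}).Nonempty :=
    Set.nonempty_iff_ne_empty.mpr fun he => h (by rw [cseq, he, sInf_empty])
  exact csInf_mem hne

theorem Good.exists_exchange_Ioc_ne {k c : ℕ} (h : Good k c) {E : Type} [DecidableEq E]
    {Γ : Fin k → Type} [∀ t, AddCommGroup (Γ t)] (ψ : ∀ t, E → Γ t) (f : ∀ t, Γ t)
    {B : Finset E} {ℓ : ℕ} {X Y : Fin ℓ → Finset E} (hB : ∀ t, ∑ e ∈ B, ψ t e ≠ f t)
    (hXB : ∀ i, X i ⊆ B) (hYB : ∀ i, ∀ e ∈ Y i, e ∉ B)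
    (hXne : ∀ i, (X i).Nonempty) (hYne : ∀ i, (Y i).Nonempty)
    (hXd : Pairwise (Disjoint on X)) (hYd : Pairwise (Disjoint on Y))
    {J : ℕ → Fin ℓ} (hJ : Monotone J) (hJlt : ∀ r < c, J r < J (r + 1)) :
    ∃ s s', s ≤ s' ∧ s' < c ∧ ∀ t, ∑ e ∈ exchange B X Y (Ioc (J s) (J (s' + 1))), ψ t e ≠ f t := by
  let block : Fin c → Finset (Fin ℓ) := fun r => Ioc (J r) (J (r + 1))
  have hblock_ne : ∀ r, (block r).Nonempty := fun r => nonempty_Ioc.mpr (hJlt r r.2)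
  have hblock_disj : Pairwise (Disjoint on block) := fun r r' hrr' =>
    hJ.pairwise_disjoint_on_finset_Ioc_succ (Fin.val_injective.ne hrr')
  obtain ⟨s, s', hss', hgood⟩ := h E Γ ψ f B c (fun r => (block r).biUnion X)
    (fun r => (block r).biUnion Y) hB (fun r => biUnion_subset.mpr fun i _ => hXB i)
    (fun r e he => by obtain ⟨i, -, hi⟩ := mem_biUnion.mp he; exact hYB i e hi)
    (fun r => (hblock_ne r).biUnion fun i _ => hXne i)
    (fun r => (hblock_ne r).biUnion fun i _ => hYne i)
    (hblock_disj.disjoint_biUnion hXd) (hblock_disj.disjoint_biUnion hYd) le_rfl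
  have hunion : (Icc s s').biUnion block = Ioc (J s) (J (s' + 1)) :=
    (Fin.biUnion_Icc_eq_biUnion_Ico_val _ s s').trans (hJ.finset_biUnion_Ico_Ioc_map_succ _ _)
  refine ⟨s, s', hss', s'.2, fun t => ?_⟩
  rw [← hunion, ← exchange_biUnion]
  exact hgood t

theorem Good.succ {k c : ℕ} (h : Good k c) : Good (k + 1) ((k + 1) * c + 1) := by
  intro E _ Γ _ ψ f B ℓ X Y hB hXB hYB hXne hYne hXd hYd hℓ
  by_contra! hfail
  replace hfail : ∀ i j, i ≤ j → ∃ t, ∑ e ∈ exchange B X Y (Icc i j), ψ t e = f t := hfail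
  obtain ⟨n, rfl⟩ : ∃ n, ℓ = n + 1 := ⟨ℓ - 1, by omega⟩
  set d : ∀ t, Fin (n + 1) → Γ t := fun t i => ∑ e ∈ Y i, ψ t e - ∑ e ∈ X i, ψ t e
  have hsum : ∀ t s, ∑ e ∈ exchange B X Y s, ψ t e = ∑ e ∈ B, ψ t e + ∑ i ∈ s, d t i :=
    fun t => sum_exchange (ψ t) hXB hYB hXd hYd
  choose col hcol using fun y : Fin (n + 1) => hfail 0 y (Fin.zero_le y)
  obtain ⟨t, J, hJ, hJlt, hJcol⟩ := exists_monotone_chain_of_mul_lt_card col (c := c)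
    (by simpa using hℓ)
  have hblock_sum : ∀ m m', m ≤ m' → ∑ i ∈ Ioc (J m) (J m'), d t i = 0 := by
    intro m m' hmm'
    have hpre : ∀ m, ∑ e ∈ B, ψ t e + ∑ i ∈ Iic (J m), d t i = f t := fun m => by
      have := hcol (J m)
      rwa [hJcol, hsum, ← bot_eq_zero, Icc_bot] at this
    have := (hpre m').trans (hpre m).symm
    rwa [← Iic_union_Ioc_eq_Iic (hJ hmm'), sum_union (Iic_disjoint_Ioc le_rfl), ← add_assoc,
      add_eq_left] at this
  obtain ⟨s, s', hss', hs'c, hgood⟩ := h.exists_exchange_Ioc_ne (fun u => ψ (t.succAbove u))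
    (fun u => f (t.succAbove u)) (fun u => hB _) hXB hYB hXne hYne hXd hYd hJ hJlt
  have hlt : J s < J (s' + 1) := (hJlt s (by omega)).trans_le (hJ (by omega))
  obtain ⟨t', ht'⟩ := hfail (Order.succ (J s)) (J (s' + 1)) (Order.succ_le_of_lt hlt)
  rw [Icc_succ_left_eq_Ioc_of_not_isMax hlt.not_isMax] at ht'
  rcases eq_or_ne t' t with rfl | hne
  · rw [hsum, hblock_sum _ _ (by omega), add_zero] at ht'
    exact hB t' ht'
  · obtain ⟨u, rfl⟩ := Fin.exists_succAbove_eq hne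
    exact hgood u ht'

/-- Claim 5.3: `c_k ≤ k · c_{k-1} + 1` for all `k ≥ 1` (in particular `c_k` is finite). -/
theorem stmt_4 (k : ℕ) (hk : 1 ≤ k) : cseq k ≤ k * cseq (k - 1) + 1 := by
  obtain ⟨k, rfl⟩ := Nat.exists_eq_add_of_le' hk
  rw [Nat.add_sub_cancel]
  rcases eq_or_ne (cseq k) ⊤ with htop | hfin
  · simp [htop]
  · obtain ⟨n, hn, hcn⟩ := exists_good_eq_cseq hfin
    rw [← hcn]
    exact_mod_cast cseq_le_of_good hn.succ
end

section
/- Let $\psi_1\colon E\to\Gamma_1$ and $\psi_2\colon E\to\Gamma_2$ be maps to abelian groups, $f_1\in\Gamma_1$, $f_2\in\Gamma_2$, and let $B\subseteq E$ satisfy $\psi_1(B)\ne f_1$ and $\psi_2(B)\ne f_2$. Let $X_1,\dots,X_4\subseteq B$ and $Y_1,\dots,Y_4\subseteq E\setminus B$ be pairwise disjoint nonempty subsets and set $B_{i,j} := (B\setminus(X_i\cup\dots\cup X_j))\cup(Y_i\cup\dots\cup Y_j)$ for $1\le i\le j\le 4$. Then there exist $1\le i\le j\le 4$ such that $\psi_1(B_{i,j})\ne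 f_1$ and $\psi_2(B_{i,j})\ne f_2$. -/
/-!
With `d k := ψ(Y k) - ψ(X k)` the exchanged sets satisfy `ψ(B_{i,j}) = ψ(B) + d i + ⋯ + d j`, so with
the potentials `a m := d 0 + ⋯ + d (m - 1)` on `{0, …, 4}` the ten sets `B_{i,j}` are the ten edges of
`K₅`. If the claim failed, every edge `x < y` would be red (`a₁ y - a₁ x = g₁ := f₁ - ψ₁(B) ≠ 0`) or
blue (the same for `ψ₂`). Along a closed walk of red edges the potential `a₁` changes by
`(ascents - descents) • g₁`, so no red closed walk has exactly one more ascent than descents, and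
likewise for blue. A finite search shows that every 2-colouring of `K₅` has such a monochromatic
cycle (a triangle, or a pentagon with three ascents).
-/

open Finset

section Exchange

variable {E ι Γ : Type*} [DecidableEq E] [AddCommGroup Γ]

theorem sum_sdiff_biUnion_union_biUnion (ψ : E → Γ) {B : Finset E} {X Y : ι → Finset E}
    (S : Finset ι) (hXB : ∀ i ∈ S, X i ⊆ B) (hYB : ∀ i ∈ S, Disjoint (Y i) B)
    (hX : (S : Set ι).PairwiseDisjoint X) (hY : (S : Set ι).PairwiseDisjoint Y) :
    ∑ e ∈ (B \ S.biUnion X) ∪ S.biUnion Y, ψ e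
      = ∑ e ∈ B, ψ e + ∑ i ∈ S, (∑ e ∈ Y i, ψ e - ∑ e ∈ X i, ψ e) := by
  have hdisj : Disjoint (B \ S.biUnion X) (S.biUnion Y) :=
    (disjoint_biUnion_right _ _ _).mpr fun i hi => ((hYB i hi).mono_right sdiff_subset).symm
  rw [sum_union hdisj, sum_sdiff_eq_sub (biUnion_subset.mpr hXB), sum_biUnion hX,
    sum_biUnion hY, sum_sub_distrib]
  abel

end Exchange

theorem Fin.sum_Icc_eq_partialSum_sub {Γ : Type*} [AddCommGroup Γ] {n : ℕ} (f : Fin n → Γ)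
    {i j : Fin n} (hij : i ≤ j) :
    ∑ k ∈ Icc i j, f k = partialSum f j.succ - partialSum f i.castSucc := by
  simp only [partialSum, List.sum_take_ofFn, val_succ, val_castSucc]
  rw [eq_sub_iff_add_eq, ← sum_union]
  · congr 1
    ext k
    simp only [mem_union, mem_Icc, mem_filter_univ, Fin.le_def] at hij ⊢
    omega
  · simp only [disjoint_left, mem_Icc, mem_filter_univ, Fin.le_def]
    omega

section ClosedWalks

variable {V Γ : Type*} [LinearOrder V] [AddCommGroup Γ]

def netAscents : List V → ℤ
  | x :: y :: l => (if x < y then 1 else -1) + netAscents (y :: l)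
  | _ => 0

def RisesBy (a : V → Γ) (g : Γ) (x y : V) : Prop :=
  (x < y ∧ a y - a x = g) ∨ (y < x ∧ a x - a y = g)

theorem sub_eq_netAscents_smul {a : V → Γ} {g : Γ} :
    ∀ (x : V) (l : List V), (x :: l).IsChain (RisesBy a g) →
      a ((x :: l).getLast (List.cons_ne_nil x l)) - a x = netAscents (x :: l) • g
  | x, [], _ => by simp [netAscents]
  | x, y :: l, h => by
    rw [List.isChain_cons_cons] at h
    obtain ⟨hxy, hl⟩ := h
    rw [List.getLast_cons (List.cons_ne_nil y l), netAscents, add_smul,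
      ← sub_eq_netAscents_smul y l hl]
    rcases hxy with ⟨hlt, hstep⟩ | ⟨hlt, hstep⟩
    · rw [if_pos hlt, one_smul, ← hstep]
      abel
    · rw [if_neg hlt.not_gt, neg_smul, one_smul, ← hstep]
      abel

theorem netAscents_smul_eq_zero {a : V → Γ} {g : Γ} {w : List V}
    (hclosed : w.head? = w.getLast?) (hw : w.IsChain (RisesBy a g)) : netAscents w • g = 0 := by
  cases w with
  | nil => simp [netAscents]
  | cons x l =>
    rw [← sub_eq_netAscents_smul x l hw, sub_eq_zero]
    simp only [List.head?_cons, List.getLast?_eq_some_getLast (List.cons_ne_nil x l),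
      Option.some.injEq] at hclosed
    rw [← hclosed]

end ClosedWalks

section Colourings

variable {V : Type*} [LinearOrder V]

def edgeColour (c : {p : V × V // p.1 < p.2} → Bool) (x y : V) : Option Bool :=
  if h : x < y then some (c ⟨(x, y), h⟩) else if h : y < x then some (c ⟨(y, x), h⟩) else none

theorem edgeColour_eq_some {c : {p : V × V // p.1 < p.2} → Bool} {x y : V} {col : Bool} :
    edgeColour c x y = some col ↔
      (∃ h : x < y, c ⟨(x, y), h⟩ = col) ∨ ∃ h : y < x, c ⟨(y, x), h⟩ = col := by
  unfold edgeColour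
  split_ifs with hxy hyx
  · simp [hxy, hxy.not_gt]
  · simp [hxy, hyx]
  · simp [hxy, hyx]

-- The search space: every cycle of `K_n` on at least three vertices, closed at its least vertex,
-- in both orientations.
def simpleCycles (n : ℕ) : List (List (Fin n)) :=
  (List.finRange n).sublists.flatMap fun
    | x :: t => if 2 ≤ t.length then t.permutations'.map fun p => x :: p ++ [x] else []
    | [] => []

theorem exists_monochromatic_closedWalk_netAscents_eq_one
    (c : {p : Fin 5 × Fin 5 // p.1 < p.2} → Bool) :
    ∃ w : List (Fin 5), w.head? = w.getLast? ∧ netAscents w = 1 ∧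
      ∃ col, w.IsChain fun x y => edgeColour c x y = some col := by
  have search : ∀ c : {p : Fin 5 × Fin 5 // p.1 < p.2} → Bool, ∃ w ∈ simpleCycles 5,
      w.head? = w.getLast? ∧ netAscents w = 1 ∧
        ∃ col, w.IsChain fun x y => edgeColour c x y = some col := by
    decide +kernel
  obtain ⟨w, -, hw⟩ := search c
  exact ⟨w, hw⟩

end Colourings

theorem exists_lt_sub_ne_and_sub_ne {Γ₁ Γ₂ : Type*} [AddCommGroup Γ₁] [AddCommGroup Γ₂]
    (a : Fin 5 → Γ₁) (b : Fin 5 → Γ₂) {g : Γ₁} {h : Γ₂} (hg : g ≠ 0) (hh : h ≠ 0) :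
    ∃ x y, x < y ∧ a y - a x ≠ g ∧ b y - b x ≠ h := by
  classical
  by_contra! hcover
  obtain ⟨w, hclosed, hnet, col, hw⟩ :=
    exists_monochromatic_closedWalk_netAscents_eq_one fun p => decide (a p.1.2 - a p.1.1 = g)
  cases col
  · refine hh ?_
    have hblue : w.IsChain (RisesBy b h) := hw.imp fun x y hxy => by
      rcases edgeColour_eq_some.mp hxy with ⟨hlt, hred⟩ | ⟨hlt, hred⟩
      · exact Or.inl ⟨hlt, hcover x y hlt (of_decide_eq_false hred)⟩
      · exact Or.inr ⟨hlt, hcover y x hlt (of_decide_eq_false hred)⟩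
    simpa [hnet] using netAscents_smul_eq_zero hclosed hblue
  · refine hg ?_
    have hred : w.IsChain (RisesBy a g) := hw.imp fun x y hxy => by
      rcases edgeColour_eq_some.mp hxy with ⟨hlt, hred⟩ | ⟨hlt, hred⟩
      · exact Or.inl ⟨hlt, of_decide_eq_true hred⟩
      · exact Or.inr ⟨hlt, of_decide_eq_true hred⟩
    simpa [hnet] using netAscents_smul_eq_zero hclosed hred

theorem exists_le_sum_Icc_ne_and_sum_Icc_ne {Γ₁ Γ₂ : Type*} [AddCommGroup Γ₁] [AddCommGroup Γ₂]
    (u : Fin 4 → Γ₁) (v : Fin 4 → Γ₂) {g : Γ₁} {h : Γ₂} (hg : g ≠ 0) (hh : h ≠ 0) :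
    ∃ i j, i ≤ j ∧ ∑ k ∈ Icc i j, u k ≠ g ∧ ∑ k ∈ Icc i j, v k ≠ h := by
  obtain ⟨x, y, hxy, hu, hv⟩ := exists_lt_sub_ne_and_sub_ne (Fin.partialSum u) (Fin.partialSum v) hg hh
  set i := x.castPred (Fin.ne_last_of_lt hxy)
  set j := y.pred (Fin.ne_zero_of_lt hxy)
  have hij : i ≤ j := by
    rw [Fin.le_def]
    simp only [i, j, Fin.coe_castPred, Fin.val_pred]
    omega
  refine ⟨i, j, hij, ?_, ?_⟩
  · rwa [Fin.sum_Icc_eq_partialSum_sub u hij, Fin.succ_pred, Fin.castSucc_castPred]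
  · rwa [Fin.sum_Icc_eq_partialSum_sub v hij, Fin.succ_pred, Fin.castSucc_castPred]

theorem stmt_5_general {E Γ₁ Γ₂ : Type*} [DecidableEq E] [AddCommGroup Γ₁] [AddCommGroup Γ₂]
    (ψ₁ : E → Γ₁) (ψ₂ : E → Γ₂) (f₁ : Γ₁) (f₂ : Γ₂)
    (B : Finset E) (hB₁ : ∑ e ∈ B, ψ₁ e ≠ f₁) (hB₂ : ∑ e ∈ B, ψ₂ e ≠ f₂)
    (X Y : Fin 4 → Finset E)
    (hXB : ∀ i, X i ⊆ B) (hYB : ∀ i, ∀ e ∈ Y i, e ∉ B)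
    (hXdisj : ∀ i j, i ≠ j → Disjoint (X i) (X j))
    (hYdisj : ∀ i j, i ≠ j → Disjoint (Y i) (Y j)) :
    ∃ i j : Fin 4, i ≤ j ∧
      ∑ e ∈ ((B \ (Finset.Icc i j).biUnion X) ∪ (Finset.Icc i j).biUnion Y), ψ₁ e ≠ f₁ ∧
      ∑ e ∈ ((B \ (Finset.Icc i j).biUnion X) ∪ (Finset.Icc i j).biUnion Y), ψ₂ e ≠ f₂ := by
  obtain ⟨i, j, hij, h₁, h₂⟩ := exists_le_sum_Icc_ne_and_sum_Icc_ne
    (fun k => ∑ e ∈ Y k, ψ₁ e - ∑ e ∈ X k, ψ₁ e) (fun k => ∑ e ∈ Y k, ψ₂ e - ∑ e ∈ X k, ψ₂ e)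
    (sub_ne_zero.mpr hB₁.symm) (sub_ne_zero.mpr hB₂.symm)
  have hYB' : ∀ k ∈ Icc i j, Disjoint (Y k) B := fun k _ => disjoint_left.mpr (hYB k)
  have hX : (Icc i j : Set (Fin 4)).PairwiseDisjoint X := fun k _ l _ hkl => hXdisj k l hkl
  have hY : (Icc i j : Set (Fin 4)).PairwiseDisjoint Y := fun k _ l _ hkl => hYdisj k l hkl
  refine ⟨i, j, hij, fun h => h₁ ?_, fun h => h₂ ?_⟩ <;>
  · rw [sum_sdiff_biUnion_union_biUnion _ _ (fun k _ => hXB k) hYB' hX hY] at h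
    exact eq_sub_of_add_eq' h

/-- Claim 5.4 (`c₂ ≤ 4`): with two labelings, a set `B` avoiding both forbidden values, and
four pairwise disjoint nonempty exchange pairs, some exchanged set avoids both values. -/
theorem stmt_5 {E Γ₁ Γ₂ : Type*} [DecidableEq E] [AddCommGroup Γ₁] [AddCommGroup Γ₂]
    (ψ₁ : E → Γ₁) (ψ₂ : E → Γ₂) (f₁ : Γ₁) (f₂ : Γ₂)
    (B : Finset E) (hB₁ : ∑ e ∈ B, ψ₁ e ≠ f₁) (hB₂ : ∑ e ∈ B, ψ₂ e ≠ f₂)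
    (X Y : Fin 4 → Finset E)
    (hXB : ∀ i, X i ⊆ B) (hYB : ∀ i, ∀ e ∈ Y i, e ∉ B)
    (hXne : ∀ i, (X i).Nonempty) (hYne : ∀ i, (Y i).Nonempty)
    (hXdisj : ∀ i j, i ≠ j → Disjoint (X i) (X j))
    (hYdisj : ∀ i j, i ≠ j → Disjoint (Y i) (Y j)) :
    ∃ i j : Fin 4, i ≤ j ∧
      ∑ e ∈ ((B \ (Finset.Icc i j).biUnion X) ∪ (Finset.Icc i j).biUnion Y), ψ₁ e ≠ f₁ ∧
      ∑ e ∈ ((B \ (Finset.Icc i j).biUnion X) ∪ (Finset.Icc i j).biUnion Y), ψ₂ e ≠ f₂ :=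
  stmt_5_general ψ₁ ψ₂ f₁ f₂ B hB₁ hB₂ X Y hXB hYB hXdisj hYdisj
end

section
/- Let $\psi_1\colon E\to\Gamma_1$ be a map to an abelian group, $f_1\in\Gamma_1$, and let $B\subseteq E$ satisfy $\psi_1(B)\ne f_1$. Let $X_1,X_2\subseteq B$ and $Y_1,Y_2\subseteq E\setminus B$ be pairwise disjoint nonempty subsets and set $B_{i,j} := (B\setminus(X_i\cup\dots\cup X_j))\cup(Y_i\cup\dots\cup Y_j)$ for $1\le i\le j\le 2$. Then there exist $1\le i\le j\le 2$ such that $\psi_1(B_{i,j})\ne f_1$. -/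
private lemma aux_sum {E Γ : Type*} [DecidableEq E] [AddCommGroup Γ]
    (ψ : E → Γ) (B X Y : Finset E) (hX : X ⊆ B) (hY : Disjoint Y B) :
    ∑ e ∈ (B \ X ∪ Y), ψ e = ∑ e ∈ B, ψ e - ∑ e ∈ X, ψ e + ∑ e ∈ Y, ψ e := by
  rw [Finset.sum_union (Finset.disjoint_of_subset_left Finset.sdiff_subset hY.symm),
    Finset.sum_sdiff_eq_sub hX]

/-- The `k = 1` case (`c₁ ≤ 2`): with one labeling, a set `B` avoiding the forbidden
value, and two disjoint nonempty exchange pairs, some exchanged set avoids the value. -/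
theorem stmt_6 {E Γ₁ : Type*} [DecidableEq E] [AddCommGroup Γ₁]
    (ψ₁ : E → Γ₁) (f₁ : Γ₁)
    (B : Finset E) (hB₁ : ∑ e ∈ B, ψ₁ e ≠ f₁)
    (X Y : Fin 2 → Finset E)
    (hXB : ∀ i, X i ⊆ B) (hYB : ∀ i, ∀ e ∈ Y i, e ∉ B)
    (hXne : ∀ i, (X i).Nonempty) (hYne : ∀ i, (Y i).Nonempty)
    (hXdisj : ∀ i j, i ≠ j → Disjoint (X i) (X j))
    (hYdisj : ∀ i j, i ≠ j → Disjoint (Y i) (Y j)) :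
    ∃ i j : Fin 2, i ≤ j ∧
      ∑ e ∈ ((B \ (Finset.Icc i j).biUnion X) ∪ (Finset.Icc i j).biUnion Y), ψ₁ e ≠ f₁ := by
  by_contra hc
  push_neg at hc
  have hYd : ∀ i, Disjoint (Y i) B :=
    fun i => Finset.disjoint_left.mpr (hYB i)
  have hIcc00 : Finset.Icc (0 : Fin 2) 0 = {0} := by decide
  have hIcc11 : Finset.Icc (1 : Fin 2) 1 = {1} := by decide
  have hIcc01 : Finset.Icc (0 : Fin 2) 1 = {0, 1} := by decide
  have h00 := hc 0 0 le_rfl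
  have h11 := hc 1 1 le_rfl
  have h01 := hc 0 1 (by decide)
  rw [hIcc00, Finset.singleton_biUnion, Finset.singleton_biUnion,
    aux_sum ψ₁ B (X 0) (Y 0) (hXB 0) (hYd 0)] at h00
  rw [hIcc11, Finset.singleton_biUnion, Finset.singleton_biUnion,
    aux_sum ψ₁ B (X 1) (Y 1) (hXB 1) (hYd 1)] at h11
  have hbu : ∀ (Z : Fin 2 → Finset E), ({0, 1} : Finset (Fin 2)).biUnion Z = Z 0 ∪ Z 1 := by
    intro Z
    simp [Finset.biUnion_insert]
  rw [hIcc01, hbu, hbu,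
    aux_sum ψ₁ B (X 0 ∪ X 1) (Y 0 ∪ Y 1)
      (Finset.union_subset (hXB 0) (hXB 1))
      (Finset.disjoint_union_left.mpr ⟨hYd 0, hYd 1⟩),
    Finset.sum_union (hXdisj 0 1 (by decide)),
    Finset.sum_union (hYdisj 0 1 (by decide))] at h01
  apply hB₁
  have key : ∑ e ∈ B, ψ₁ e =
      (∑ e ∈ B, ψ₁ e - ∑ e ∈ X 0, ψ₁ e + ∑ e ∈ Y 0, ψ₁ e) +
      (∑ e ∈ B, ψ₁ e - ∑ e ∈ X 1, ψ₁ e + ∑ e ∈ Y 1, ψ₁ e) -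
      (∑ e ∈ B, ψ₁ e - (∑ e ∈ X 0, ψ₁ e + ∑ e ∈ X 1, ψ₁ e) +
        (∑ e ∈ Y 0, ψ₁ e + ∑ e ∈ Y 1, ψ₁ e)) := by abel
  rw [h00, h11, h01] at key
  simpa using key
end

section
/- Let $k\ge 1$, $r=2^k-1$, and let $E$ be a set of size $2r$ with a fixed subset $A\subseteq E$ of size $r$; let $B=E\setminus A$. Define abelian groups $\Gamma_k=\mathbb{Z}$ and $\Gamma_i=\mathbb{Z}_{2^i}$ for $i\in[k-1]$, and labelings $\psi_i(e)=2^{i-1}-1$ for $e\in A$, $\psi_i(e)=2^{i-1}$ for $e\notin A$ when $i\ne k$, and $\psi_k(e)=-2^{k-1}$ for $e\notin A$. Then: (a) $\psi_i(B)\ne 0$ for all $i\in[k]$; and (b) for every $r$-element subset $A'\subseteq E$ with $A'\ne B$ (equivalently, with $|A\setminus A'|\le r-1$, i.e., $A'$ obtained from $A$ by exchanging $\ell$ elements for some $0\le\ell\le r-1$), there exists $i\in[k]$ with $\psi_i(A')=0$. -/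
/-! Let `A'` be an `r`-set meeting `A` in `c` elements. A direct count gives
`ψ_i(A') = -(2^(i-1) + c)` in `ℤ/2^i` (as `r ≡ -1 mod 2^i`) and `ψ_k(A') = r (c - 2^(k-1))`
in `ℤ`. For `A' = B` we have `c = 0`, and none of these vanish. Otherwise `0 < c < 2^k`; writing
`c = 2^j · odd`, either `j < k - 1` and `ψ_(j+1)(A') = 0`, or `c = 2^(k-1)` and `ψ_k(A') = 0`. -/

open Finset

lemma Finset.sum_ite_mem_eq_card {E R : Type*} [DecidableEq E] [CommRing R]
    (S A : Finset E) (a b : R) :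
    ∑ e ∈ S, (if e ∈ A then a else b) = #(S ∩ A) * a + (#S - #(S ∩ A)) * b := by
  rw [sum_ite, sum_const, sum_const, filter_mem_eq_inter, filter_notMem_eq_sdiff,
    ← card_inter_add_card_sdiff S A]
  simp only [nsmul_eq_mul]
  push_cast
  ring

namespace ZMod

lemma two_pow_eq_zero_of_le {i n : ℕ} (h : i ≤ n) : (2 : ZMod (2 ^ i)) ^ n = 0 := by
  have h2i : (2 : ZMod (2 ^ i)) ^ i = 0 := by exact_mod_cast natCast_self (2 ^ i)
  rw [← Nat.add_sub_cancel' h, pow_add, h2i, zero_mul]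

lemma two_pow_pred_ne_zero {i : ℕ} (hi : 1 ≤ i) : (2 : ZMod (2 ^ i)) ^ (i - 1) ≠ 0 := by
  have hlt : 2 ^ (i - 1) < 2 ^ i := Nat.pow_lt_pow_right (by norm_num) (by omega)
  exact_mod_cast (natCast_eq_zero_iff _ _).not.mpr
    (Nat.not_dvd_of_pos_of_lt (by positivity) hlt)

lemma natCast_two_pow_sub_one {i k : ℕ} (h : i ≤ k) :
    ((2 ^ k - 1 : ℕ) : ZMod (2 ^ i)) = -1 := by
  rw [Nat.cast_sub Nat.one_le_two_pow]
  push_cast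
  rw [two_pow_eq_zero_of_le h, zero_sub]

lemma two_pow_add_two_pow_mul_odd (j v : ℕ) :
    (2 : ZMod (2 ^ (j + 1))) ^ j + ((2 ^ j * (2 * v + 1) : ℕ) : ZMod (2 ^ (j + 1))) = 0 := by
  push_cast
  linear_combination (v + 1 : ZMod (2 ^ (j + 1))) * two_pow_eq_zero_of_le le_rfl

end ZMod

section Labelings

variable {E : Type*} [DecidableEq E] (S A : Finset E) {k : ℕ}

lemma sum_ite_mem_two_pow_zmod {i : ℕ} (hi : i ≤ k) (hS : #S = 2 ^ k - 1) :
    ∑ e ∈ S, (if e ∈ A then (2 : ZMod (2 ^ i)) ^ (i - 1) - 1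
               else (2 : ZMod (2 ^ i)) ^ (i - 1))
      = -(2 ^ (i - 1) + #(S ∩ A)) := by
  rw [sum_ite_mem_eq_card, hS, ZMod.natCast_two_pow_sub_one hi]
  ring

lemma sum_ite_mem_two_pow_int (hk : 1 ≤ k) (hS : #S = 2 ^ k - 1) :
    ∑ e ∈ S, (if e ∈ A then (2 : ℤ) ^ (k - 1) - 1 else -(2 : ℤ) ^ (k - 1))
      = (2 ^ k - 1) * (#(S ∩ A) - 2 ^ (k - 1)) := by
  have h2k : (2 : ℤ) ^ k = 2 * 2 ^ (k - 1) := by rw [← pow_succ', Nat.sub_add_cancel hk]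
  rw [sum_ite_mem_eq_card, hS, Nat.cast_sub Nat.one_le_two_pow]
  push_cast
  linear_combination -(#(S ∩ A) : ℤ) * h2k

end Labelings

lemma exists_two_pow_add_eq_zero_or_eq_two_pow {k c : ℕ} (hc0 : c ≠ 0) (hck : c < 2 ^ k) :
    (∃ i, 1 ≤ i ∧ i ≤ k - 1 ∧ (2 : ZMod (2 ^ i)) ^ (i - 1) + c = 0) ∨
      c = 2 ^ (k - 1) := by
  obtain ⟨j, u, ⟨v, rfl⟩, rfl⟩ := Nat.exists_eq_two_pow_mul_odd hc0
  have hjk : j < k := by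
    by_contra! h
    have : 2 ^ k ≤ 2 ^ j * (2 * v + 1) :=
      (Nat.pow_le_pow_right two_pos h).trans (Nat.le_mul_of_pos_right _ (by omega))
    omega
  rcases Nat.lt_or_ge (j + 1) k with hj | hj
  · exact Or.inl ⟨j + 1, by omega, by omega, ZMod.two_pow_add_two_pow_mul_odd j v⟩
  · obtain rfl : k = j + 1 := by omega
    have hv : v = 0 := by
      by_contra hv
      have : 2 ^ j * 3 ≤ 2 ^ j * (2 * v + 1) := Nat.mul_le_mul_left _ (by omega)
      rw [pow_succ] at hck
      omega
    simp [hv]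

lemma Finset.card_inter_ne_zero_of_ne_compl {E : Type*} [Fintype E] [DecidableEq E]
    {A A' : Finset E} (hcard : #A' = #Aᶜ) (hne : A' ≠ Aᶜ) : #(A' ∩ A) ≠ 0 := by
  intro h0
  have hsub : A' ⊆ Aᶜ := subset_compl_iff_disjoint_right.mpr (disjoint_iff_inter_eq_empty.mpr
    (card_eq_zero.mp h0))
  exact hne (eq_of_subset_of_card_le hsub hcard.ge)

/-- Example 5.1 (tightness example): with `r = 2^k - 1`, `|E| = 2r`, `A ⊆ E` of size `r`,
`B = E \ A`, and labelings `ψ_i` into `ZMod (2^i)` for `i ∈ [k-1]` and into `ℤ` for `i = k`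
given by `ψ_i(e) = 2^{i-1} - 1` on `A`, `ψ_i(e) = 2^{i-1}` off `A` (`i ≠ k`), and
`ψ_k(e) = -2^{k-1}` off `A`:  (a) `ψ_i(B) ≠ 0` for all `i`; and (b) every `r`-set
`A' ≠ B` is zero in some labeling. -/
theorem stmt_7 {E : Type*} [Fintype E] [DecidableEq E]
    (k : ℕ) (hk : 1 ≤ k) (r : ℕ) (hr : r = 2 ^ k - 1)
    (hE : Fintype.card E = 2 * r) (A : Finset E) (hA : A.card = r) :
    (∀ i, 1 ≤ i → i ≤ k - 1 →
      ∑ e ∈ Aᶜ, (if e ∈ A then (2 : ZMod (2 ^ i)) ^ (i - 1) - 1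
                 else (2 : ZMod (2 ^ i)) ^ (i - 1)) ≠ 0) ∧
    (∑ e ∈ Aᶜ, (if e ∈ A then (2 : ℤ) ^ (k - 1) - 1 else -(2 : ℤ) ^ (k - 1)) ≠ 0) ∧
    ∀ A' : Finset E, A'.card = r → A' ≠ Aᶜ →
      (∃ i, 1 ≤ i ∧ i ≤ k - 1 ∧
        ∑ e ∈ A', (if e ∈ A then (2 : ZMod (2 ^ i)) ^ (i - 1) - 1
                   else (2 : ZMod (2 ^ i)) ^ (i - 1)) = 0) ∨
      ∑ e ∈ A', (if e ∈ A then (2 : ℤ) ^ (k - 1) - 1 else -(2 : ℤ) ^ (k - 1)) = 0 := by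
  subst hr
  have hAc : #Aᶜ = 2 ^ k - 1 := by rw [card_compl, hA, hE]; omega
  have hB : #(Aᶜ ∩ A) = 0 := by rw [inter_comm, inter_compl, card_empty]
  refine ⟨fun i hi hik => ?_, ?_, fun A' hA' hne => ?_⟩
  · rw [sum_ite_mem_two_pow_zmod _ _ (by omega) hAc, hB, Nat.cast_zero, add_zero, neg_ne_zero]
    exact ZMod.two_pow_pred_ne_zero hi
  · rw [sum_ite_mem_two_pow_int _ _ hk hAc, hB, Nat.cast_zero, zero_sub]
    exact mul_ne_zero (sub_pos.mpr (one_lt_pow₀ one_lt_two (by omega))).ne'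
      (neg_ne_zero.mpr (by positivity))
  · have hc0 := card_inter_ne_zero_of_ne_compl (hA'.trans hAc.symm) hne
    have hck : #(A' ∩ A) < 2 ^ k := (card_le_card inter_subset_left).trans_lt
      (by rw [hA']; exact Nat.sub_lt Nat.one_le_two_pow one_pos)
    rcases exists_two_pow_add_eq_zero_or_eq_two_pow hc0 hck with ⟨i, hi, hik, hzero⟩ | hc
    · left
      exact ⟨i, hi, hik, by rw [sum_ite_mem_two_pow_zmod _ _ (by omega) hA', hzero, neg_zero]⟩
    · right
      rw [sum_ite_mem_two_pow_int _ _ hk hA', hc]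
      push_cast
      ring
end

section
/- Let $M$ be a sparse paving matroid of rank $r$ on ground set $E$, and let $k\ge 0$ be an integer with $\min\{r, |E|-r\}\ge\binom{2k}{k}$. Then for every basis $B$ of $M$, there exist sets $Y\subseteq B\subseteq X\subseteq E$ such that the minor $(M|X)/Y$ is isomorphic to the uniform matroid $U_{k,2k}$. -/
/-- A matroid `M` is sparse paving of rank `r` if every base has `r` elements and any two
distinct non-base `r`-subsets of the ground set intersect in at most `r - 2` elements. -/
def IsSparsePaving {α : Type*} (M : Matroid α) (r : ℕ) : Prop :=
  (∀ B, M.IsBase B → B.ncard = r) ∧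
  ∀ H₁ H₂ : Set α, H₁ ⊆ M.E → H₂ ⊆ M.E → H₁.ncard = r → H₂.ncard = r →
    ¬ M.IsBase H₁ → ¬ M.IsBase H₂ → H₁ ≠ H₂ → (H₁ ∩ H₂).ncard ≤ r - 2

/-!
The minor is grown one element at a time. Given `Y ⊆ B ⊆ X` with `(M ∣ X) / Y ≅ U_{i,2i}`, first
release some `y ∈ Y` from the contraction to get `U_{i+1,2i+1}`, then add some `x ∉ X` to get
`U_{i+1,2i+2}`. A candidate `y` fails only if `(S ∪ Y) \ {y}` is a non-base for some
`(i+1)`-subset `S` of `X \ Y`, and two candidates failing for the same `S` would give two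
non-bases differing in a single element, which sparse paving forbids. Hence at most
`C(2i, i+1)` of the `r - i` candidates fail; likewise at most `C(2i+1, i)` of the `|E| - r - i`
candidates `x` fail, and `C(2i+1, i) + i < C(2i+2, i+1)` keeps both counts positive up to `i = k`.
-/

open Set Nat

section

variable {α : Type*} {M : Matroid α} {r : ℕ}

theorem Set.exists_forall_of_ncard_lt {β : Type*} {C : Set α} {W : Set β} {P : α → β → Prop}
    (hW : W.Finite) (hcard : W.ncard < C.ncard)
    (hP : ∀ c₁ ∈ C, ∀ c₂ ∈ C, ∀ w ∈ W, ¬ P c₁ w → ¬ P c₂ w → c₁ = c₂) :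
    ∃ c ∈ C, ∀ w ∈ W, P c w := by
  by_contra! h
  obtain ⟨c, hc⟩ := nonempty_of_ncard_ne_zero (by omega : C.ncard ≠ 0)
  have : Nonempty β := ⟨(h c hc).choose⟩
  choose! f hfW hf using h
  obtain ⟨c₁, hc₁, c₂, hc₂, hne, heq⟩ := exists_ne_map_eq_of_ncard_lt_of_maps_to hcard hfW hW
  exact hne (hP c₁ hc₁ c₂ hc₂ _ (hfW c₁ hc₁) (hf c₁ hc₁) (heq ▸ hf c₂ hc₂))

theorem Nat.choose_add_lt_centralBinom_succ (k : ℕ) :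
    (2 * k + 1).choose k + k < centralBinom (k + 1) := by
  have hpascal : centralBinom (k + 1) = 2 * (2 * k + 1).choose k := by
    rw [centralBinom_eq_two_mul_choose, show 2 * (k + 1) = 2 * k + 1 + 1 by ring,
      choose_succ_succ, choose_symm_half]
    ring
  have hlow : k + 1 ≤ (2 * k + 1).choose k :=
    calc k + 1 = (k + 1).choose k := (choose_succ_self_right k).symm
      _ ≤ (2 * k + 1).choose k := choose_le_choose k (by omega)
  omega

namespace IsSparsePaving

theorem eq_of_not_isBase_insert (hsp : IsSparsePaving M r) (hr : 2 ≤ r) {A : Set α} {a b : α}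
    (hA : A.ncard + 1 = r) (ha : a ∉ A) (hb : b ∉ A) (haE : insert a A ⊆ M.E)
    (hbE : insert b A ⊆ M.E) (hna : ¬ M.IsBase (insert a A)) (hnb : ¬ M.IsBase (insert b A)) :
    a = b := by
  have hAfin : A.Finite := finite_of_ncard_pos (by omega)
  by_contra hab
  have hne : insert a A ≠ insert b A := fun h ↦
    (mem_insert_iff.mp (h ▸ mem_insert a A)).elim hab ha
  have hle := hsp.2 _ _ haE hbE (by rw [ncard_insert_of_notMem ha hAfin, hA])
    (by rw [ncard_insert_of_notMem hb hAfin, hA]) hna hnb hne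
  have hA_le : A.ncard ≤ (insert a A ∩ insert b A).ncard :=
    ncard_le_ncard (subset_inter (subset_insert a A) (subset_insert b A))
      ((hAfin.insert a).inter_of_left _)
  omega

theorem eq_of_not_isBase_sdiff_singleton (hsp : IsSparsePaving M r) (hr : 2 ≤ r) {A : Set α}
    {a b : α} (hA : A.ncard = r + 1) (ha : a ∈ A) (hb : b ∈ A) (hAE : A ⊆ M.E)
    (hna : ¬ M.IsBase (A \ {a})) (hnb : ¬ M.IsBase (A \ {b})) : a = b := by
  by_contra hab
  have hAfin : A.Finite := finite_of_ncard_pos (by omega)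
  have hinsert : ∀ {c d}, c ∈ A → c ≠ d → insert c (A \ {c, d}) = A \ {d} := by
    intro c d hc hcd
    ext x
    simp only [mem_insert_iff, mem_sdiff, mem_singleton_iff]
    grind
  have hcard : (A \ {a, b}).ncard + 1 = r := by
    rw [ncard_sdiff (pair_subset ha hb), ncard_pair hab, hA]
    omega
  have hA_a : insert a (A \ {a, b}) = A \ {b} := hinsert ha hab
  have hA_b : insert b (A \ {a, b}) = A \ {a} := by rw [pair_comm, hinsert hb (Ne.symm hab)]
  refine hab (hsp.eq_of_not_isBase_insert hr hcard (fun h ↦ h.2 (by simp)) (fun h ↦ h.2 (by simp))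
    ?_ ?_ (hA_a ▸ hnb) (hA_b ▸ hna))
  · exact hA_a ▸ sdiff_subset.trans hAE
  · exact hA_b ▸ sdiff_subset.trans hAE

end IsSparsePaving

/-- `(M ∣ X) / Y` is a `B`-minor isomorphic to `U_{k,n}`: as bases are equicardinal, for `k ≤ n`
it suffices that every `k`-subset of its ground set `X \ Y` extends `Y` to a base of `M`. -/
structure Matroid.IsUniformBMinor (M : Matroid α) (B X Y : Set α) (k n : ℕ) : Prop where
  subset_base : Y ⊆ B
  base_subset : B ⊆ X
  subset_ground : X ⊆ M.E
  ncard_sdiff : (X \ Y).ncard = n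
  isBase_union : ∀ S ⊆ X \ Y, S.ncard = k → M.IsBase (S ∪ Y)

namespace Matroid.IsUniformBMinor

variable [M.Finite] {B X Y : Set α} {k n : ℕ}

theorem ncard_eq_of_isBase_union (h : M.IsUniformBMinor B X Y k n) (hkn : k ≤ n) {S : Set α}
    (hS : S ⊆ X \ Y) (hSY : M.IsBase (S ∪ Y)) : S.ncard = k := by
  obtain ⟨S₀, hS₀, hS₀k⟩ := exists_subset_card_eq (s := X \ Y) (h.ncard_sdiff ▸ hkn)
  have hXfin : X.Finite := M.set_finite X h.subset_ground
  have hYfin : Y.Finite := hXfin.subset (h.subset_base.trans h.base_subset)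
  have hcard := hSY.ncard_eq_ncard_of_isBase (h.isBase_union S₀ hS₀ hS₀k)
  rwa [ncard_union_eq (disjoint_sdiff_left.mono_left hS) (hXfin.subset (hS.trans sdiff_subset))
    hYfin, ncard_union_eq (disjoint_sdiff_left.mono_left hS₀)
    (hXfin.subset (hS₀.trans sdiff_subset)) hYfin,
    hS₀k, Nat.add_right_cancel_iff] at hcard

theorem ncard_add (h : M.IsUniformBMinor B X Y k n) (hkn : k ≤ n) (hB : M.IsBase B) :
    Y.ncard + k = B.ncard := by
  have hk := h.ncard_eq_of_isBase_union hkn (sdiff_subset_sdiff_left h.base_subset)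
    (by rwa [sdiff_union_of_subset h.subset_base])
  rw [← hk, add_comm,
    ncard_sdiff_add_ncard_of_subset h.subset_base (M.set_finite B hB.subset_ground)]

theorem exists_sdiff_singleton (h : M.IsUniformBMinor B X Y k n) (hsp : IsSparsePaving M r)
    (hr : 2 ≤ r) (hB : M.IsBase B) (hkn : k ≤ n) (hcount : n.choose (k + 1) < Y.ncard) :
    ∃ y ∈ Y, M.IsUniformBMinor B X (Y \ {y}) (k + 1) (n + 1) := by
  have hXYfin : (X \ Y).Finite := (M.set_finite X h.subset_ground).sdiff
  have hYX : Y ⊆ X := h.subset_base.trans h.base_subset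
  have hYr : Y.ncard + k = r := hsp.1 B hB ▸ h.ncard_add hkn hB
  obtain ⟨y, hyY, hy⟩ := exists_forall_of_ncard_lt (C := Y) (W := {S ⊆ X \ Y | S.ncard = k + 1})
    (P := fun y S ↦ M.IsBase ((S ∪ Y) \ {y})) (hXYfin.finite_subsets.subset fun S hS ↦ hS.1)
    (by rwa [ncard_powerset_ncard hXYfin, h.ncard_sdiff]) fun y₁ hy₁ y₂ hy₂ S hS ↦ by
      refine hsp.eq_of_not_isBase_sdiff_singleton hr ?_ (Or.inr hy₁) (Or.inr hy₂)
        (union_subset (hS.1.trans (sdiff_subset.trans h.subset_ground))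
          (hYX.trans h.subset_ground))
      rw [ncard_union_eq (disjoint_sdiff_left.mono_left hS.1) (hXYfin.subset hS.1)
        ((M.set_finite X h.subset_ground).subset hYX), hS.2]
      omega
  refine ⟨y, hyY, sdiff_subset.trans h.subset_base, h.base_subset, h.subset_ground, ?_, ?_⟩
  · have hXY : X \ (Y \ {y}) = insert y (X \ Y) := by
      ext x
      simp only [mem_sdiff, mem_insert_iff, mem_singleton_iff]
      grind
    rw [hXY, ncard_insert_of_notMem (fun hyXY ↦ hyXY.2 hyY) hXYfin, h.ncard_sdiff]
  · intro S hS hSk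
    by_cases hyS : y ∈ S
    · have hSY : S ∪ Y \ {y} = S \ {y} ∪ Y := by
        ext x
        simp only [mem_union, mem_sdiff, mem_singleton_iff]
        grind
      rw [hSY]
      refine h.isBase_union _ (fun x hx ↦ ?_) (by rw [ncard_sdiff_singleton_of_mem hyS, hSk]; rfl)
      grind [hS hx.1]
    · have hSY : S ∪ Y \ {y} = (S ∪ Y) \ {y} := by
        ext x
        simp only [mem_union, mem_sdiff, mem_singleton_iff]
        grind
      rw [hSY]
      refine hy S ⟨fun x hx ↦ ?_, hSk⟩
      grind [hS hx]

theorem exists_insert (h : M.IsUniformBMinor B X Y (k + 1) n) (hsp : IsSparsePaving M r)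
    (hr : 2 ≤ r) (hB : M.IsBase B) (hkn : k + 1 ≤ n) (hcount : n.choose k < (M.E \ X).ncard) :
    ∃ x ∈ M.E \ X, M.IsUniformBMinor B (insert x X) Y (k + 1) (n + 1) := by
  have hXYfin : (X \ Y).Finite := (M.set_finite X h.subset_ground).sdiff
  have hYX : Y ⊆ X := h.subset_base.trans h.base_subset
  have hYr : Y.ncard + (k + 1) = r := hsp.1 B hB ▸ h.ncard_add hkn hB
  obtain ⟨x, hx, hxS⟩ := exists_forall_of_ncard_lt (C := M.E \ X) (W := {S ⊆ X \ Y | S.ncard = k})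
    (P := fun x S ↦ M.IsBase (insert x (S ∪ Y))) (hXYfin.finite_subsets.subset fun S hS ↦ hS.1)
    (by rwa [ncard_powerset_ncard hXYfin, h.ncard_sdiff]) fun x₁ hx₁ x₂ hx₂ S hS ↦ by
      have hSYX : S ∪ Y ⊆ X := union_subset (hS.1.trans sdiff_subset) hYX
      refine hsp.eq_of_not_isBase_insert hr ?_ (fun h₁ ↦ hx₁.2 (hSYX h₁)) (fun h₂ ↦ hx₂.2 (hSYX h₂))
        (insert_subset hx₁.1 (hSYX.trans h.subset_ground))
        (insert_subset hx₂.1 (hSYX.trans h.subset_ground))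
      rw [ncard_union_eq (disjoint_sdiff_left.mono_left hS.1) (hXYfin.subset hS.1)
        ((M.set_finite X h.subset_ground).subset hYX), hS.2]
      omega
  refine ⟨x, hx, h.subset_base, h.base_subset.trans (subset_insert x X),
    insert_subset hx.1 h.subset_ground, ?_, ?_⟩
  · rw [insert_sdiff_of_notMem _ (fun hxY ↦ hx.2 (hYX hxY)),
      ncard_insert_of_notMem (fun hxXY ↦ hx.2 hxXY.1) hXYfin, h.ncard_sdiff]
  · intro S hS hSk
    by_cases hxS' : x ∈ S
    · have hSY : S ∪ Y = insert x (S \ {x} ∪ Y) := by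
        ext z
        simp only [mem_union, mem_insert_iff, mem_sdiff, mem_singleton_iff]
        grind
      rw [hSY]
      refine hxS _ ⟨fun z hz ↦ ?_, by rw [ncard_sdiff_singleton_of_mem hxS', hSk]; rfl⟩
      grind [hS hz.1]
    · refine h.isBase_union S (fun z hz ↦ ?_) hSk
      grind [hS hz]

end Matroid.IsUniformBMinor

theorem IsSparsePaving.exists_isUniformBMinor [M.Finite] (hsp : IsSparsePaving M r) {B : Set α}
    (hB : M.IsBase B) :
    ∀ k, centralBinom k ≤ min r (M.E.ncard - r) → ∃ X Y, M.IsUniformBMinor B X Y k (2 * k)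
  | 0, _ => ⟨B, B, subset_rfl, subset_rfl, hB.subset_ground, by simp, fun S hS _ ↦ by
      rwa [subset_empty_iff.mp (hS.trans (sdiff_self (a := B)).subset), empty_union]⟩
  | k + 1, hk => by
    have hbinom := choose_add_lt_centralBinom_succ k
    have hr : 2 ≤ r := (two_le_centralBinom _ k.succ_pos).trans (hk.trans (min_le_left _ _))
    obtain ⟨X, Y, h⟩ := hsp.exists_isUniformBMinor hB k
      ((centralBinom_strictMono k.lt_succ_self).le.trans hk)
    have hY := hsp.1 B hB ▸ h.ncard_add (by omega) hB
    have hchoose : (2 * k).choose (k + 1) ≤ (2 * k + 1).choose k :=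
      choose_symm_half k ▸ choose_le_choose (k + 1) (by omega)
    obtain ⟨y, hy, h'⟩ := h.exists_sdiff_singleton hsp hr hB (by omega) (by omega)
    have hY' := hsp.1 B hB ▸ h'.ncard_add (by omega) hB
    have hX := ncard_sdiff_add_ncard_of_subset (h'.subset_base.trans h'.base_subset)
      (M.set_finite X h'.subset_ground)
    obtain ⟨x, -, h''⟩ := h'.exists_insert hsp hr hB (by omega) (by
      rw [ncard_sdiff h'.subset_ground (M.set_finite X h'.subset_ground), ← hX, h'.ncard_sdiff]
      omega)
    exact ⟨_, _, h''⟩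

end

/-- Theorem 5.7: if `M` is sparse paving of rank `r` with `min{r, |E| - r} ≥ C(2k, k)`,
then for every base `B` there is a `B`-minor `(M|X)/Y` isomorphic to `U_{k,2k}`, i.e.
sets `Y ⊆ B ⊆ X ⊆ E` such that `|X \ Y| = 2k` and the bases of `(M|X)/Y` — the sets
`B' ⊆ X \ Y` with `B' ∪ Y` a base of `M` — are exactly the `k`-subsets of `X \ Y`. -/
theorem stmt_10 {α : Type*} (M : Matroid α) (hfin : M.E.Finite) (r k : ℕ)
    (hsp : IsSparsePaving M r)
    (hk : Nat.choose (2 * k) k ≤ min r (M.E.ncard - r)) :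
    ∀ B, M.IsBase B → ∃ X Y : Set α, Y ⊆ B ∧ B ⊆ X ∧ X ⊆ M.E ∧
      (X \ Y).ncard = 2 * k ∧
      ∀ B' ⊆ X \ Y, (M.IsBase (B' ∪ Y) ↔ B'.ncard = k) := by
  intro B hB
  have : M.Finite := ⟨hfin⟩
  obtain ⟨X, Y, h⟩ := hsp.exists_isUniformBMinor hB k (centralBinom_eq_two_mul_choose k ▸ hk)
  exact ⟨X, Y, h.subset_base, h.base_subset, h.subset_ground, h.ncard_sdiff, fun S hS ↦
    ⟨h.ncard_eq_of_isBase_union (by omega) hS, fun hSk ↦ h.isBase_union S hS hSk⟩⟩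
end

section
/- Let $M$ be a matroid with ground set $E$, $\psi\colon E\to\Gamma$ a labeling to an abelian group, and $F\subseteq\Gamma$ finite. Suppose that for every basis $A$ of $M$ there exists an $F$-avoiding basis $B$ (i.e., $\psi(B)\notin F$) with $|A\setminus B|\le |F|$, provided an $F$-avoiding basis exists. Then, if $M$ has at least one $F$-avoiding basis, the number of $F$-avoiding bases of $M$ is at least $|\mathcal{B}|/\sum_{i=0}^{|F|}\binom{r}{i}\binom{n-r}{i}$, where $\mathcal{B}$ is the basis family of $M$, $r$ its rank, and $n=|E|$. -/
/-!
Send every basis `A` to a nearby `F`-avoiding basis `B`. A basis `A` with `|A \ B| = i` is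
determined by the pair `(B \ A, A \ B)` of `i`-subsets of `B` and of `E \ B`, so each
`F`-avoiding basis is hit at most `∑_{i ≤ |F|} C(r, i) C(n - r, i)` times.
-/

namespace Set

variable {α β : Type*}

theorem ncard_le_ncard_mul_of_forall_exists {X : Set α} {Y : Set β} {R : α → β → Prop}
    {N : ℕ} (hX : X.Finite) (hY : Y.Finite) (hcover : ∀ x ∈ X, ∃ y ∈ Y, R x y)
    (hball : ∀ y ∈ Y, {x ∈ X | R x y}.ncard ≤ N) :
    X.ncard ≤ Y.ncard * N := by
  have hsub : X ⊆ ⋃ y ∈ hY.toFinset, {x ∈ X | R x y} := fun x hx ↦ by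
    obtain ⟨y, hy, hxy⟩ := hcover x hx
    exact mem_biUnion (hY.mem_toFinset.mpr hy) ⟨hx, hxy⟩
  calc X.ncard
      ≤ (⋃ y ∈ hY.toFinset, {x ∈ X | R x y}).ncard :=
        ncard_le_ncard hsub (hX.subset (iUnion₂_subset fun _ _ ↦ sep_subset _ _))
    _ ≤ ∑ y ∈ hY.toFinset, {x ∈ X | R x y}.ncard := Finset.set_ncard_biUnion_le _ _
    _ ≤ Y.ncard * N := by
        rw [ncard_eq_toFinset_card Y hY, ← smul_eq_mul]
        exact Finset.sum_le_card_nsmul _ _ _ fun y hy ↦ hball y (hY.mem_toFinset.mp hy)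

theorem ncard_setOf_ncard_sdiff_le {E t : Set α} (hE : E.Finite) (htE : t ⊆ E) (k : ℕ) :
    {s | s ⊆ E ∧ s.ncard = t.ncard ∧ (s \ t).ncard ≤ k}.ncard ≤
      ∑ i ∈ Finset.range (k + 1), t.ncard.choose i * (E.ncard - t.ncard).choose i := by
  set S := {s | s ⊆ E ∧ s.ncard = t.ncard ∧ (s \ t).ncard ≤ k}
  set P : ℕ → Set (Set α × Set α) := fun i ↦
    {a ⊆ t | a.ncard = i} ×ˢ {b ⊆ E \ t | b.ncard = i}
  have hmaps : ∀ s ∈ S, (t \ s, s \ t) ∈ ⋃ i ∈ Finset.range (k + 1), P i := by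
    rintro s ⟨hsE, hcard, hk⟩
    have hswap : (t \ s).ncard = (s \ t).ncard :=
      ((ncard_eq_ncard_iff_ncard_sdiff_eq_ncard_sdiff (hE.subset hsE) (hE.subset htE)).mp
        hcard).symm
    exact mem_biUnion (Finset.mem_range.mpr (Nat.lt_succ_of_le hk))
      ⟨⟨sdiff_subset, hswap⟩, ⟨sdiff_subset_sdiff_left hsE, rfl⟩⟩
  have hrecover : ∀ s : Set α, t \ (t \ s) ∪ s \ t = s := fun s ↦ by
    rw [sdiff_sdiff_right_self, inter_comm, inter_union_sdiff]
  have hinj : InjOn (fun s ↦ (t \ s, s \ t)) S := fun s₁ _ s₂ _ h ↦ by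
    rw [← hrecover s₁, ← hrecover s₂, (Prod.mk.inj h).1, (Prod.mk.inj h).2]
  have hfinite : (⋃ i ∈ Finset.range (k + 1), P i).Finite :=
    .biUnion (Finset.finite_toSet _) fun i _ ↦
      ((hE.subset htE).finite_subsets.subset fun _ h ↦ h.1).prod
        (hE.sdiff.finite_subsets.subset fun _ h ↦ h.1)
  calc S.ncard
      ≤ (⋃ i ∈ Finset.range (k + 1), P i).ncard :=
        ncard_le_ncard_of_injOn _ hmaps hinj hfinite
    _ ≤ ∑ i ∈ Finset.range (k + 1), (P i).ncard := Finset.set_ncard_biUnion_le _ _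
    _ = _ := by
        simp only [P, ncard_prod, ncard_powerset_ncard (hE.subset htE),
          ncard_powerset_ncard hE.sdiff, ncard_sdiff htE (hE.subset htE)]

end Set

namespace Matroid

variable {α : Type*}

theorem finite_setOf_isBase (M : Matroid α) (hE : M.E.Finite) : {B | M.IsBase B}.Finite :=
  hE.finite_subsets.subset fun _ hB ↦ hB.subset_ground

theorem ncard_setOf_isBase_ncard_sdiff_le {M : Matroid α} (hE : M.E.Finite) {B : Set α}
    (hB : M.IsBase B) (k : ℕ) :
    {A | M.IsBase A ∧ (A \ B).ncard ≤ k}.ncard ≤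
      ∑ i ∈ Finset.range (k + 1), B.ncard.choose i * (M.E.ncard - B.ncard).choose i := by
  refine (Set.ncard_le_ncard ?_ (hE.finite_subsets.subset fun _ h ↦ h.1)).trans
    (Set.ncard_setOf_ncard_sdiff_le hE hB.subset_ground k)
  exact fun A hA ↦ ⟨hA.1.subset_ground, hA.1.ncard_eq_ncard_of_isBase hB, hA.2⟩

end Matroid

/-- The counting consequence of the proximity conjecture: if every base `A` is within
exchange distance `|F|` of an `F`-avoiding base (whenever one exists), and an `F`-avoiding
base exists, then the number of `F`-avoiding bases is at least
`|𝓑| / ∑_{i=0}^{|F|} C(r, i) · C(n - r, i)`. -/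
theorem stmt_16 {α Γ : Type*} [AddCommGroup Γ] (M : Matroid α) (hfin : M.E.Finite)
    (ψ : α → Γ) (F : Finset Γ) (r : ℕ) (hr : ∀ B, M.IsBase B → B.ncard = r)
    (hprox : (∃ B, M.IsBase B ∧ (∑ᶠ e ∈ B, ψ e) ∉ F) →
      ∀ A, M.IsBase A → ∃ B, M.IsBase B ∧ (∑ᶠ e ∈ B, ψ e) ∉ F ∧ (A \ B).ncard ≤ F.card)
    (hex : ∃ B, M.IsBase B ∧ (∑ᶠ e ∈ B, ψ e) ∉ F) :
    ({B : Set α | M.IsBase B ∧ (∑ᶠ e ∈ B, ψ e) ∉ F}.ncard : ℝ) ≥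
      ({B : Set α | M.IsBase B}.ncard : ℝ) /
        ∑ i ∈ Finset.range (F.card + 1),
          (r.choose i : ℝ) * ((M.E.ncard - r).choose i : ℝ) := by
  have hbases := M.finite_setOf_isBase hfin
  have hcount : {B : Set α | M.IsBase B}.ncard ≤
      {B : Set α | M.IsBase B ∧ (∑ᶠ e ∈ B, ψ e) ∉ F}.ncard *
        ∑ i ∈ Finset.range (F.card + 1), r.choose i * (M.E.ncard - r).choose i := by
    refine Set.ncard_le_ncard_mul_of_forall_exists
      (R := fun A B ↦ (A \ B).ncard ≤ F.card) hbases (hbases.subset fun _ h ↦ h.1)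
      (fun A hA ↦ ?_) fun B hB ↦ ?_
    · obtain ⟨B, hB, hBF, hAB⟩ := hprox hex A hA
      exact ⟨B, ⟨hB, hBF⟩, hAB⟩
    · rw [← hr B hB.1]
      exact M.ncard_setOf_isBase_ncard_sdiff_le hfin hB.1 F.card
  have hpos : (0 : ℝ) < ∑ i ∈ Finset.range (F.card + 1),
      (r.choose i : ℝ) * ((M.E.ncard - r).choose i : ℝ) :=
    Finset.sum_pos' (fun i _ ↦ by positivity) ⟨0, by simp⟩
  rw [ge_iff_le, div_le_iff₀ hpos]
  exact_mod_cast hcount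
end

section
/- Let $M$ be a sparse paving matroid of rank $r$ on ground set $E$, $\psi\colon E\to\Gamma$ a labeling to an abelian group with $|\psi(E)|\ge r+1$ (the labels take at least $r+1$ distinct values), and $F\subseteq\Gamma$ with $|F|=r-1$. Suppose $E$ is partitioned into two bases $B$ and $E\setminus B$ with $\psi(B)\notin F$. Then $M$ has an $F$-avoiding basis distinct from $B$; in particular, $B$ is not the unique basis $X$ with $\psi(X)\notin F$. -/
/-!
Suppose every base other than `B` has its label sum in `F`. If `T` is a rainbow base and `y` has
a label not on `T`, the `r` exchanges `T - e + y` are rainbow with pairwise distinct sums, so they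
cannot all be bases different from `B`, as `|F| = r - 1`. If one of them, `Z`, is not a base, then
`Z ≠ E \ B` yields `g ∉ Z ∪ B`; sparse paving makes every `Z - z + g` a base, and these are again
`r` bases other than `B` with distinct sums. A rainbow base exists: `B` itself, or else a base
with the most labels, since doubling a label can always be traded for a fresh one. The only
remaining case, `T - e + y = B`, forces `B` to be rainbow and hence `T = B ∌ y`.
-/

open Finset

theorem exists_label_notMem_image {α Γ : Type*} [Fintype α] [DecidableEq Γ] {ψ : α → Γ}
    {S : Finset α} (h : S.card < (univ.image ψ).card) :
    ∃ y, ψ y ∉ S.image ψ := by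
  obtain ⟨v, hv, hvS⟩ := exists_mem_notMem_of_card_lt_card (h.trans_le' card_image_le)
  obtain ⟨y, -, rfl⟩ := mem_image.1 hv
  exact ⟨y, hvS⟩

section Exchange

variable {α Γ : Type*} [DecidableEq α] {ψ : α → Γ} {S : Finset α} {e y : α}

theorem card_insert_erase_of_notMem (he : e ∈ S) (hy : y ∉ S) :
    (insert y (S.erase e)).card = S.card := by
  rw [card_insert_of_notMem (fun h => hy (mem_of_mem_erase h)), card_erase_add_one he]

theorem sum_insert_erase_of_notMem [AddCommGroup Γ] (ψ : α → Γ) (he : e ∈ S) (hy : y ∉ S) :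
    ∑ x ∈ insert y (S.erase e), ψ x = ψ y + (∑ x ∈ S, ψ x - ψ e) := by
  rw [sum_insert (fun h => hy (mem_of_mem_erase h)), sum_erase_eq_sub he]

theorem injOn_insert_erase [DecidableEq Γ] (hS : Set.InjOn ψ S) (hy : ψ y ∉ S.image ψ) :
    Set.InjOn ψ ↑(insert y (S.erase e)) := by
  have hyS : y ∉ S.erase e := fun h => hy (mem_image_of_mem ψ (mem_of_mem_erase h))
  rw [coe_insert, Set.injOn_insert (mod_cast hyS)]
  exact ⟨hS.mono (coe_subset.2 (erase_subset e S)),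
    fun h => hy (by simpa using Set.image_mono (coe_subset.2 (erase_subset e S)) h)⟩

theorem card_image_insert_erase_of_eq [DecidableEq Γ] {e' : α} (he : e ∈ S) (he' : e' ∈ S)
    (hne : e ≠ e') (hψ : ψ e = ψ e') (hy : ψ y ∉ S.image ψ) :
    ((insert y (S.erase e)).image ψ).card = (S.image ψ).card + 1 := by
  have herase : (S.erase e).image ψ = S.image ψ := by
    conv_rhs => rw [← insert_erase he, image_insert]
    exact (insert_eq_of_mem (hψ ▸ mem_image_of_mem ψ (mem_erase.2 ⟨hne.symm, he'⟩))).symm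
  rw [image_insert, herase, card_insert_of_notMem hy]

/-- The sums over the exchanges `S - e + g` of a rainbow set `S` are pairwise distinct. -/
theorem exists_sum_insert_erase_notMem [AddCommGroup Γ] {F : Finset Γ} {g : α}
    (hS : Set.InjOn ψ S) (hg : g ∉ S) (hF : F.card < S.card) :
    ∃ e ∈ S, ∑ x ∈ insert g (S.erase e), ψ x ∉ F := by
  by_contra! h
  have hinj : Set.InjOn (fun e => ∑ x ∈ insert g (S.erase e), ψ x) S := by
    intro a ha b hb hab
    simp only [sum_insert_erase_of_notMem ψ ha hg, sum_insert_erase_of_notMem ψ hb hg] at hab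
    exact hS ha hb (sub_right_injective (add_left_cancel hab))
  exact hF.not_ge (card_le_card_of_injOn _ h hinj)

end Exchange

namespace IsSparsePaving

variable {α : Type*} {M : Matroid α} {r : ℕ}

theorem isBase_or_isBase [DecidableEq α] (hsp : IsSparsePaving M r) (hr : 2 ≤ r)
    {U S T : Finset α} (hU : (U : Set α) ⊆ M.E) (hUcard : U.card ≤ r + 1) (hSU : S ⊆ U)
    (hTU : T ⊆ U) (hS : S.card = r) (hT : T.card = r) (hST : S ≠ T) :
    M.IsBase S ∨ M.IsBase T := by
  by_contra! h
  have hinter := hsp.2 S T ((coe_subset.2 hSU).trans hU) ((coe_subset.2 hTU).trans hU)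
    (by rwa [Set.ncard_coe_finset]) (by rwa [Set.ncard_coe_finset]) h.1 h.2
    (fun h' => hST (coe_injective h'))
  rw [← coe_inter, Set.ncard_coe_finset] at hinter
  have hunion := card_le_card (union_subset hSU hTU)
  have := card_inter_add_card_union S T
  omega

theorem card_eq_of_isBase (hsp : IsSparsePaving M r) {S : Finset α} (hS : M.IsBase S) :
    S.card = r := by
  simpa using hsp.1 _ hS

/-- A base with the most labels is rainbow: a repeated label could be exchanged for a fresh one. -/
theorem exists_isBase_injOn {Γ : Type*} [Fintype α] [DecidableEq Γ] (hsp : IsSparsePaving M r)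
    (hE : M.E = Set.univ) (hr : 2 ≤ r) {ψ : α → Γ} (hlab : r < (univ.image ψ).card) :
    ∃ T : Finset α, M.IsBase T ∧ Set.InjOn ψ T := by
  classical
  obtain ⟨B, hB⟩ := M.exists_isBase
  obtain ⟨B, rfl⟩ := B.toFinite.exists_finset_coe
  obtain ⟨T, hTmem, hTmax⟩ := exists_max_image (univ.filter fun S : Finset α => M.IsBase S)
    (fun S => (S.image ψ).card) ⟨B, mem_filter.2 ⟨mem_univ _, hB⟩⟩
  have hT : M.IsBase T := (mem_filter.1 hTmem).2
  have hTcard := hsp.card_eq_of_isBase hT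
  refine ⟨T, hT, fun x hx x' hx' hψ => ?_⟩
  by_contra hne
  obtain ⟨y, hy⟩ := exists_label_notMem_image (hTcard ▸ hlab)
  have hyT : y ∉ T := fun h => hy (mem_image_of_mem ψ h)
  have hnotBase : ∀ a ∈ T, ∀ a' ∈ T, a ≠ a' → ψ a = ψ a' →
      ¬ M.IsBase ↑(insert y (T.erase a)) := fun a ha a' ha' haa' hψa hbase => by
    have := hTmax _ (mem_filter.2 ⟨mem_univ _, hbase⟩)
    rw [card_image_insert_erase_of_eq ha ha' haa' hψa hy] at this
    omega
  have hexch : insert y (T.erase x) ≠ insert y (T.erase x') := fun h => by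
    have : x' ∈ insert y (T.erase x) := mem_insert_of_mem (mem_erase.2 ⟨Ne.symm hne, hx'⟩)
    rw [h, mem_insert, mem_erase] at this
    exact this.elim (fun h' => hyT (h' ▸ hx')) (fun h' => h'.1 rfl)
  rcases hsp.isBase_or_isBase hr (hE ▸ Set.subset_univ _) (hTcard ▸ card_insert_le y T)
    (insert_subset_insert y (erase_subset x T)) (insert_subset_insert y (erase_subset x' T))
    ((card_insert_erase_of_notMem hx hyT).trans hTcard)
    ((card_insert_erase_of_notMem hx' hyT).trans hTcard) hexch with h | h
  · exact hnotBase x hx x' hx' hne hψ h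
  · exact hnotBase x' hx' x hx (Ne.symm hne) hψ.symm h

end IsSparsePaving

section Avoiding

variable {α Γ : Type*} [DecidableEq α] [AddCommGroup Γ] {ψ : α → Γ} {M : Matroid α} {r : ℕ}
  {F : Finset Γ} {B : Finset α}

theorem exists_isBase_ne_sum_notMem {S : Finset α} {g : α} (hS : Set.InjOn ψ S) (hg : g ∉ S)
    (hF : F.card < S.card) (hbase : ∀ e ∈ S, M.IsBase ↑(insert g (S.erase e)))
    (hne : ∀ e ∈ S, insert g (S.erase e) ≠ B) :
    ∃ X : Set α, M.IsBase X ∧ X ≠ ↑B ∧ (∑ᶠ e ∈ X, ψ e) ∉ F := by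
  obtain ⟨e, he, hsum⟩ := exists_sum_insert_erase_notMem hS hg hF
  exact ⟨_, hbase e he, fun h => hne e he (coe_injective h), by rwa [finsum_mem_coe_finset]⟩

theorem exists_isBase_ne_sum_notMem_of_injOn [Fintype α] [DecidableEq Γ]
    (hsp : IsSparsePaving M r) (hE : M.E = Set.univ) (hr : 2 ≤ r) (hF : F.card < r)
    (hBc : M.IsBase (Set.univ \ ↑B))
    {T : Finset α} (hT : M.IsBase T) (hTinj : Set.InjOn ψ T) {y : α} (hy : ψ y ∉ T.image ψ)
    (hTB : ∀ e ∈ T, insert y (T.erase e) ≠ B) :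
    ∃ X : Set α, M.IsBase X ∧ X ≠ ↑B ∧ (∑ᶠ e ∈ X, ψ e) ∉ F := by
  have hTcard := hsp.card_eq_of_isBase hT
  have hyT : y ∉ T := fun h => hy (mem_image_of_mem ψ h)
  by_cases hall : ∀ e ∈ T, M.IsBase ↑(insert y (T.erase e))
  · exact exists_isBase_ne_sum_notMem hTinj hyT (hTcard ▸ hF) hall hTB
  push Not at hall
  obtain ⟨e, he, hZ⟩ := hall
  set Z := insert y (T.erase e)
  have hZcard : Z.card = r := (card_insert_erase_of_notMem he hyT).trans hTcard
  obtain ⟨g, hgZ, hgB⟩ : ∃ g, g ∉ Z ∧ g ∉ B := by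
    by_contra! h
    have hsub : Set.univ \ (B : Set α) ⊆ Z := fun x hx => by_contra fun hxZ => hx.2 (h x hxZ)
    refine hZ (Set.eq_of_subset_of_ncard_le hsub ?_ (Set.toFinite _) ▸ hBc)
    rw [Set.ncard_coe_finset, hZcard, hsp.1 _ hBc]
  refine exists_isBase_ne_sum_notMem (injOn_insert_erase hTinj hy) hgZ (hZcard ▸ hF)
    (fun z hz => ?_) (fun z _ h => hgB (h ▸ mem_insert_self g _))
  refine ((hsp.isBase_or_isBase hr (hE ▸ Set.subset_univ _) (hZcard ▸ card_insert_le g Z)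
    (insert_subset_insert g (erase_subset z Z)) (subset_insert g Z)
    ((card_insert_erase_of_notMem hz hgZ).trans hZcard) hZcard ?_)).resolve_right hZ
  exact fun h => hgZ (h ▸ mem_insert_self g _)

end Avoiding

theorem stmt_17_general {α Γ : Type*} [Fintype α] [AddCommGroup Γ] [DecidableEq Γ]
    (M : Matroid α) (hE : M.E = Set.univ) (r : ℕ) (hr : 1 ≤ r)
    (hsp : IsSparsePaving M r)
    (ψ : α → Γ) (hlab : r + 1 ≤ (Finset.univ.image ψ).card)
    (F : Finset Γ) (hF : F.card = r - 1)
    (B : Set α) (hB : M.IsBase B) (hBc : M.IsBase (Set.univ \ B)) :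
    ∃ X : Set α, M.IsBase X ∧ X ≠ B ∧ (∑ᶠ e ∈ X, ψ e) ∉ F := by
  classical
  obtain ⟨B, rfl⟩ := B.toFinite.exists_finset_coe
  rcases hr.eq_or_lt with rfl | hr
  · obtain ⟨b, hb⟩ := card_pos.1 ((hsp.card_eq_of_isBase hB).trans_gt one_pos)
    refine ⟨_, hBc, fun h => ?_, by simp [card_eq_zero.1 hF]⟩
    have hb' : b ∈ Set.univ \ (B : Set α) := by rw [h]; exact hb
    exact hb'.2 hb
  obtain ⟨T, hT, hTinj, hTB⟩ : ∃ T : Finset α, M.IsBase T ∧ Set.InjOn ψ T ∧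
      (Set.InjOn ψ B → T = B) := by
    by_cases hBinj : Set.InjOn ψ B
    · exact ⟨B, hB, hBinj, fun _ => rfl⟩
    · obtain ⟨T, hT, hTinj⟩ := hsp.exists_isBase_injOn hE hr hlab
      exact ⟨T, hT, hTinj, fun h => absurd h hBinj⟩
  obtain ⟨y, hy⟩ := exists_label_notMem_image (ψ := ψ) ((hsp.card_eq_of_isBase hT).trans_lt hlab)
  refine exists_isBase_ne_sum_notMem_of_injOn hsp hE hr (by omega) hBc hT hTinj hy
    (fun e _ h => hy (mem_image_of_mem ψ ?_))
  rw [hTB (h ▸ injOn_insert_erase hTinj hy), ← h]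
  exact mem_insert_self y _

/-- The case `|ψ(E)| ≥ r + 1` in the proof of Theorem 3.1: if a sparse paving matroid of
rank `r` with at least `r + 1` distinct labels is partitioned into bases `B` and `E \ B`
with `ψ(B) ∉ F` (where `|F| = r - 1`), then there is an `F`-avoiding base other
than `B`. -/
theorem stmt_17 {α Γ : Type*} [Fintype α] [AddCommGroup Γ] [DecidableEq Γ]
    (M : Matroid α) (hE : M.E = Set.univ) (r : ℕ) (hr : 1 ≤ r)
    (hsp : IsSparsePaving M r)
    (ψ : α → Γ) (hlab : r + 1 ≤ (Finset.univ.image ψ).card)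
    (F : Finset Γ) (hF : F.card = r - 1)
    (B : Set α) (hB : M.IsBase B) (hBc : M.IsBase (Set.univ \ B))
    (hBav : (∑ᶠ e ∈ B, ψ e) ∉ F) :
    ∃ X : Set α, M.IsBase X ∧ X ≠ B ∧ (∑ᶠ e ∈ X, ψ e) ∉ F :=
  stmt_17_general M hE r hr hsp ψ hlab F hF B hB hBc
end

section
/- Every matroid whose restriction to the union of any two bases is strongly base orderable is SIBO; in particular, every strongly base orderable (SBO) matroid is subsequence-interchangeably base orderable (SIBO). -/
/-- `M` is strongly base orderable: for any two bases `A, B` there is a bijection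
`σ : A → B` with `(B \ σ(X)) ∪ X` a base for every `X ⊆ A`. -/
def IsSBO {α : Type*} (M : Matroid α) : Prop :=
  ∀ A B : Set α, M.IsBase A → M.IsBase B →
    ∃ σ : α → α, Set.BijOn σ A B ∧ ∀ X ⊆ A, M.IsBase ((B \ σ '' X) ∪ X)

/-- `M` is subsequence-interchangeably base orderable (SIBO): every pair of bases `A, B`
admits orderings `a, b` such that `(B \ {b_i, …, b_j}) ∪ {a_i, …, a_j}` is a base for all
`i ≤ j`. -/
def IsSIBO {α : Type*} (M : Matroid α) : Prop :=
  ∀ A B : Set α, M.IsBase A → M.IsBase B →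
    ∃ (r : ℕ) (a b : Fin r → α),
      Function.Injective a ∧ A = Set.range a ∧
      Function.Injective b ∧ B = Set.range b ∧
      ∀ i j : Fin r, i ≤ j →
        M.IsBase ((B \ (b '' Set.Icc i j)) ∪ (a '' Set.Icc i j))

/-! Order `A` arbitrarily and order `B` along the strongly base orderable bijection `σ`: the
exchange of the interval `{a_i, …, a_j}` against its image `{b_i, …, b_j} = σ {a_i, …, a_j}`
is then an instance of the exchange property of `σ`. -/

open Set Function Matroid

theorem Set.BijOn.exists_fin_enum {α β : Type*} {σ : α → β} {A : Set α} {B : Set β}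
    (hσ : BijOn σ A B) (hA : A.Finite) :
    ∃ (r : ℕ) (a : Fin r → α),
      Injective a ∧ A = range a ∧ Injective (σ ∘ a) ∧ B = range (σ ∘ a) := by
  obtain ⟨r, a, rfl⟩ := hA.fin_embedding
  refine ⟨r, a, a.injective, rfl, fun i j hij => a.injective ?_, ?_⟩
  · exact hσ.injOn (mem_range_self i) (mem_range_self j) hij
  · rw [range_comp, hσ.image_eq]

theorem IsSBO.restrict_of_spanning {α : Type*} {M : Matroid α} (hM : IsSBO M) {S : Set α}
    (hS : M.Spanning S) : IsSBO (M ↾ S) := by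
  intro A B hA hB
  rw [hS.isBase_restrict_iff] at hA hB
  obtain ⟨σ, hσ, hexch⟩ := hM A B hA.1 hB.1
  refine ⟨σ, hσ, fun X hX => hS.isBase_restrict_iff.2 ⟨hexch X hX, ?_⟩⟩
  exact union_subset (sdiff_subset.trans hB.2) (hX.trans hA.2)

theorem isSIBO_of_forall_isSBO_restrict {α : Type*} {M : Matroid α} [M.RankFinite]
    (h : ∀ A B : Set α, M.IsBase A → M.IsBase B → IsSBO (M ↾ (A ∪ B))) : IsSIBO M := by
  intro A B hA hB
  have hS : M.Spanning (A ∪ B) := hA.spanning_of_superset subset_union_left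
  obtain ⟨σ, hσ, hexch⟩ := h A B hA hB A B (hS.isBase_restrict_iff.2 ⟨hA, subset_union_left⟩)
    (hS.isBase_restrict_iff.2 ⟨hB, subset_union_right⟩)
  obtain ⟨r, a, ha, rfl, hb, rfl⟩ := hσ.exists_fin_enum hA.finite
  refine ⟨r, a, σ ∘ a, ha, rfl, hb, rfl, fun i j _ => ?_⟩
  rw [image_comp]
  exact (hS.isBase_restrict_iff.1 (hexch _ (image_subset_range _ _))).1

theorem IsSBO.isSIBO {α : Type*} {M : Matroid α} [M.RankFinite] (hM : IsSBO M) : IsSIBO M :=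
  isSIBO_of_forall_isSBO_restrict fun _ _ hA _ =>
    hM.restrict_of_spanning (hA.spanning_of_superset subset_union_left)

/-- Every (finite) matroid whose restriction to the union of any two bases is SBO is
SIBO; in particular, every SBO matroid is SIBO. -/
theorem stmt_18 {α : Type*} :
    (∀ M : Matroid α, M.E.Finite →
      (∀ A B : Set α, M.IsBase A → M.IsBase B → IsSBO (M.restrict (A ∪ B))) → IsSIBO M) ∧
    (∀ M : Matroid α, M.E.Finite → IsSBO M → IsSIBO M) := by
  refine ⟨fun M hE h => ?_, fun M hE hM => ?_⟩
  · have : M.Finite := ⟨hE⟩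
    exact isSIBO_of_forall_isSBO_restrict h
  · have : M.Finite := ⟨hE⟩
    exact hM.isSIBO
end
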